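/- arXiv:1506.07009 — 7 statements merged into one kernel-verified Lean document; each statement's English description precedes it below -/
import Mathlib

section
/- The set D of all real-valued sequences uniformly distributed in [-1/2, 1/2] is shy in ℝ^ℕ; that is, there exist a Borel set B ⊆ ℝ^ℕ containing D and a Borel measure μ on ℝ^ℕ (with its product topology) such that some compact set U ⊆ ℝ^ℕ satisfies 0 < μ(U) < ∞, and μ(B + v) = 0 for every v ∈ ℝ^ℕ. -/
open MeasureTheory Filter Set
open scoped Classical

/-- A sequence of reals `x` is uniformly distributed in `[a, b]`: for all `c, d` with
`a ≤ c < d ≤ b`, the proportion of the first `n` terms (indices `1 ≤ k ≤ n`) lying in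
`[c, d]` tends to `(d - c) / (b - a)`. -/
def IsUniformlyDistributedIn (x : ℕ → ℝ) (a b : ℝ) : Prop :=
  ∀ c d : ℝ, a ≤ c → c < d → d ≤ b →
    Tendsto (fun n : ℕ =>
        (((Finset.Icc 1 n).filter (fun k => x k ∈ Set.Icc c d)).card : ℝ) / n)
      atTop (nhds ((d - c) / (b - a)))

/-- A subset `S` of `ℝ^ℕ` is shy: there exist a Borel set `B ⊇ S` and a Borel measure `μ`
on `ℝ^ℕ` such that some compact set `U` satisfies `0 < μ U < ∞` and `μ (B + v) = 0` for
every `v ∈ ℝ^ℕ`. -/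
def IsShy (S : Set (ℕ → ℝ)) : Prop :=
  ∃ B : Set (ℕ → ℝ), S ⊆ B ∧ MeasurableSet B ∧
    ∃ μ : Measure (ℕ → ℝ),
      (∃ U : Set (ℕ → ℝ), IsCompact U ∧ 0 < μ U ∧ μ U < ⊤) ∧
      ∀ v : ℕ → ℝ, μ ((fun x => x + v) '' B) = 0

/-! The sequences passing the uniform distribution test on all intervals with rational
endpoints form a Borel superset `B` of the uniformly distributed ones. Probe it with Lebesgue
measure on the diagonal `{(t, t, t, …) : t ∈ [0, 1]}`: each translate of the diagonal meets `B`
in at most one point. Indeed, if `y` and `y + s` with `s > 0` both lay in `B`, take `0 < q < s`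
and `[c, d] ⊆ [a, b]` of length `> b - a - q`; the events `y k ∈ [c, d]` and
`y k + s ∈ [c, c + q]` are disjoint, yet their frequencies add up to more than `1`. -/

-- Restricting to rational endpoints makes this a countable intersection of Borel conditions.
def IsRatUniformlyDistributedIn (x : ℕ → ℝ) (a b : ℝ) : Prop :=
  ∀ c d : ℚ, a ≤ c → (c : ℝ) < d → d ≤ b →
    Tendsto (fun n : ℕ =>
        (((Finset.Icc 1 n).filter (fun k => x k ∈ Set.Icc (c : ℝ) d)).card : ℝ) / n)
      atTop (nhds ((d - c) / (b - a)))

theorem IsUniformlyDistributedIn.isRatUniformlyDistributedIn {x : ℕ → ℝ} {a b : ℝ}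
    (hx : IsUniformlyDistributedIn x a b) : IsRatUniformlyDistributedIn x a b :=
  fun c d => hx c d

theorem measurable_card_filter_mem_Icc_div (c d : ℝ) (n : ℕ) : Measurable fun x : ℕ → ℝ =>
    (((Finset.Icc 1 n).filter (fun k => x k ∈ Set.Icc c d)).card : ℝ) / n := by
  simp only [Finset.card_filter, Nat.cast_sum, Nat.cast_ite, Nat.cast_one, Nat.cast_zero]
  refine (Finset.measurable_sum _ fun k _ => ?_).div_const _
  exact Measurable.ite (measurable_pi_apply k measurableSet_Icc) measurable_const measurable_const

theorem measurableSet_setOf_isRatUniformlyDistributedIn (a b : ℝ) :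
    MeasurableSet {x | IsRatUniformlyDistributedIn x a b} := by
  simp only [IsRatUniformlyDistributedIn, ofPred_forall]
  exact .iInter fun c => .iInter fun d => .iInter fun _ => .iInter fun _ => .iInter fun _ =>
    measurableSet_tendsto _ fun n => measurable_card_filter_mem_Icc_div _ _ n

theorem add_le_one_of_tendsto_card_filter_div {p q : ℕ → Prop} [DecidablePred p]
    [DecidablePred q] {α β : ℝ} (hpq : ∀ k, p k → ¬ q k)
    (hp : Tendsto (fun n : ℕ => (((Finset.Icc 1 n).filter p).card : ℝ) / n) atTop (nhds α))
    (hq : Tendsto (fun n : ℕ => (((Finset.Icc 1 n).filter q).card : ℝ) / n) atTop (nhds β)) :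
    α + β ≤ 1 := by
  refine le_of_tendsto' (hp.add hq) fun n => ?_
  have hcard : ((Finset.Icc 1 n).filter p).card + ((Finset.Icc 1 n).filter q).card ≤ n := by
    rw [← Finset.card_union_of_disjoint (Finset.disjoint_filter.2 fun k _ => hpq k)]
    simpa using Finset.card_le_card
      (Finset.union_subset (Finset.filter_subset p (Finset.Icc 1 n)) (Finset.filter_subset q _))
  rw [← add_div]
  exact div_le_one_of_le₀ (by exact_mod_cast hcard) n.cast_nonneg

theorem IsRatUniformlyDistributedIn.nonpos_of_add_const {y : ℕ → ℝ} {a b s : ℝ}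
    (hab : a < b) (hy : IsRatUniformlyDistributedIn y a b)
    (hys : IsRatUniformlyDistributedIn (fun k => y k + s) a b) : s ≤ 0 := by
  by_contra! hs
  obtain ⟨q, hq0, hq⟩ := exists_rat_btwn (lt_min hs (half_pos (sub_pos.2 hab)))
  obtain ⟨c, hac, hc⟩ := exists_rat_btwn (show a < a + q / 2 by linarith)
  obtain ⟨d, hd, hdb⟩ := exists_rat_btwn (show b - q / 2 < b by linarith)
  have hqs := hq.trans_le (min_le_left _ _)
  have hqab := hq.trans_le (min_le_right _ _)
  have hfreq := add_le_one_of_tendsto_card_filter_div ?_ (hy c d hac.le (by linarith) hdb.le)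
    (hys c (c + q) hac.le (by push_cast; linarith) (by push_cast; linarith))
  · push_cast at hfreq
    rw [← add_div, div_le_one (sub_pos.2 hab)] at hfreq
    linarith
  · intro k hk hk'
    simp only [mem_Icc] at hk hk'
    push_cast at hk'
    linarith

theorem subsingleton_setOf_isRatUniformlyDistributedIn_const_add {a b : ℝ} (hab : a < b)
    (v : ℕ → ℝ) :
    {t : ℝ | IsRatUniformlyDistributedIn (fun k => t + v k) a b}.Subsingleton := by
  have shift (t₁ t₂ : ℝ) : (fun k => t₂ + v k) = fun k => (t₁ + v k) + (t₂ - t₁) := by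
    funext k; ring
  rintro t₁ (h₁ : IsRatUniformlyDistributedIn _ a b) t₂ (h₂ : IsRatUniformlyDistributedIn _ a b)
  have h₁₂ : t₂ - t₁ ≤ 0 := h₁.nonpos_of_add_const hab (by rwa [← shift t₁ t₂])
  have h₂₁ : t₁ - t₂ ≤ 0 := h₂.nonpos_of_add_const hab (by rwa [← shift t₂ t₁])
  linarith

theorem isShy_of_volume_setOf_const_add_mem_eq_zero {S B : Set (ℕ → ℝ)} (hSB : S ⊆ B)
    (hB : MeasurableSet B)
    (hnull : ∀ v : ℕ → ℝ, volume {t : ℝ | (fun k => t + v k) ∈ B} = 0) :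
    IsShy S := by
  set diag : ℝ → ℕ → ℝ := fun t _ => t
  have hdiag : Continuous diag := continuous_pi fun _ => continuous_id
  refine ⟨B, hSB, hB, (volume.restrict (Icc 0 1)).map diag,
    ⟨diag '' Icc 0 1, isCompact_Icc.image hdiag, ?_, measure_lt_top _ _⟩, fun v => ?_⟩
  · calc 0 < volume.restrict (Icc (0 : ℝ) 1) (Icc 0 1) := by simp
      _ ≤ volume.restrict (Icc 0 1) (diag ⁻¹' (diag '' Icc 0 1)) :=
        measure_mono (subset_preimage_image _ _)
      _ ≤ _ := Measure.le_map_apply hdiag.aemeasurable _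
  · rw [image_add_right, Measure.map_apply hdiag.measurable (hB.preimage (measurable_add_const _))]
    exact nonpos_iff_eq_zero.1 ((Measure.restrict_le_self _).trans_eq (hnull (-v)))

theorem isShy_setOf_isUniformlyDistributedIn {a b : ℝ} (hab : a < b) :
    IsShy {x | IsUniformlyDistributedIn x a b} :=
  isShy_of_volume_setOf_const_add_mem_eq_zero (fun _ hx => hx.isRatUniformlyDistributedIn)
    (measurableSet_setOf_isRatUniformlyDistributedIn a b)
    fun v => (subsingleton_setOf_isRatUniformlyDistributedIn_const_add hab v).measure_zero _

/-- The set `D` of all real valued sequences uniformly distributed in `[-1/2, 1/2]` is shy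
in `ℝ^ℕ`. -/
theorem shy_of_uniformlyDistributed :
    IsShy {x : ℕ → ℝ | IsUniformlyDistributedIn x (-(1/2)) (1/2)} :=
  isShy_setOf_isUniformlyDistributedIn (by norm_num)
end

section
/- The set ⋃_{J ∈ 𝕁} {x ∈ ℝ^ℕ : x_k ∈ [-1/2, 1/2] for every k ∉ J}, where 𝕁 is the class of all subsets of ℕ of density zero, is shy in ℝ^ℕ; that is, there exist a Borel set B ⊆ ℝ^ℕ containing this union and a Borel measure μ on ℝ^ℕ such that some compact set U satisfies 0 < μ(U) < ∞ and μ(B + v) = 0 for every v ∈ ℝ^ℕ. -/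
/-!
Take `B = {x | HasDensityZero {k | x k ∉ [-1/2, 1/2]}}`, which contains the union, and let `μ`
be Lebesgue measure on `[0, 1]` pushed forward along the curve `t ↦ (t 2^k)ₖ`. If `(t 2^k)ₖ`
lies in `B - v`, then `t 2^k` is within `1/2` of `v k` for infinitely many `k`, since a set
with finite complement does not have density zero. For fixed `k` those `t` form an interval of
length `2^{-k}`, so by Borel–Cantelli only a null set of `t` qualifies, i.e. `μ (B + v) = 0`.
-/

open MeasureTheory Filter Set
open scoped Classical

/-- A subset `J ⊆ ℕ` has density zero: `#(J ∩ [0, n]) / n → 0`. -/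
def HasDensityZero (J : Set ℕ) : Prop :=
  Tendsto (fun n : ℕ =>
      (((Finset.Icc 0 n).filter (fun k => k ∈ J)).card : ℝ) / n)
    atTop (nhds 0)

namespace HasDensityZero

theorem mono {J J' : Set ℕ} (hJ : HasDensityZero J) (h : J' ⊆ J) : HasDensityZero J' := by
  refine squeeze_zero (fun n => by positivity) (fun n => ?_) hJ
  gcongr

theorem union {J K : Set ℕ} (hJ : HasDensityZero J) (hK : HasDensityZero K) :
    HasDensityZero (J ∪ K) := by
  refine squeeze_zero (fun n => by positivity) (fun n => ?_) (by simpa using hJ.add hK)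
  rw [← add_div]
  gcongr
  simp only [mem_union, Finset.filter_or]
  exact_mod_cast Finset.card_union_le _ _

end HasDensityZero

theorem Set.Finite.hasDensityZero {K : Set ℕ} (hK : K.Finite) : HasDensityZero K := by
  refine squeeze_zero (fun n => by positivity) (fun n => ?_)
    (tendsto_const_div_atTop_nhds_zero_nat (hK.toFinset.card : ℝ))
  gcongr
  exact fun k hk => hK.mem_toFinset.2 (Finset.mem_filter.1 hk).2

theorem not_hasDensityZero_univ : ¬ HasDensityZero univ := by
  intro h
  refine absurd (ge_of_tendsto h ?_) (by norm_num : ¬ (1 : ℝ) ≤ 0)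
  filter_upwards [eventually_gt_atTop 0] with n hn
  rw [le_div_iff₀ (by exact_mod_cast hn)]
  simp

theorem HasDensityZero.frequently_notMem {J : Set ℕ} (hJ : HasDensityZero J) :
    ∃ᶠ k in atTop, k ∉ J := by
  intro hev
  have hfin : Jᶜ.Finite := by
    rw [← Nat.cofinite_eq_atTop, eventually_cofinite] at hev
    simp only [not_not] at hev
    exact hev
  exact not_hasDensityZero_univ (by simpa using hJ.union hfin.hasDensityZero)

theorem measurableSet_setOf_hasDensityZero {α : Type*} [MeasurableSpace α]
    {p : ℕ → α → Prop} (hp : ∀ k, MeasurableSet {x | p k x}) :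
    MeasurableSet {x | HasDensityZero {k | p k x}} := by
  simp only [HasDensityZero, Finset.card_filter]
  push_cast
  exact measurableSet_tendsto _ fun n =>
    (Finset.measurable_sum _ fun k _ =>
      Measurable.ite (hp k) measurable_const measurable_const).div_const _

theorem volume_setOf_frequently_mul_mem_closedBall {c : ℕ → ℝ} (hc : ∀ k, c k ≠ 0)
    (hsum : Summable fun k => |(c k)⁻¹|) (v : ℕ → ℝ) (r : ℝ) :
    volume {t : ℝ | ∃ᶠ k in atTop, t * c k ∈ Metric.closedBall (v k) r} = 0 := by
  have hlimsup : {t : ℝ | ∃ᶠ k in atTop, t * c k ∈ Metric.closedBall (v k) r} =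
      limsup (fun k => (fun t => t * c k) ⁻¹' Metric.closedBall (v k) r) atTop := by
    ext t
    simp [mem_limsup_iff_frequently_mem]
  rw [hlimsup]
  apply measure_limsup_atTop_eq_zero
  simp_rw [Real.volume_preimage_mul_right (hc _), Real.volume_closedBall]
  rw [ENNReal.tsum_mul_right, ← ENNReal.ofReal_tsum_of_nonneg (fun _ => abs_nonneg _) hsum]
  exact ENNReal.mul_ne_top ENNReal.ofReal_ne_top ENNReal.ofReal_ne_top

theorem MeasureTheory.Measure.le_map_restrict_apply_image {α β : Type*} [MeasurableSpace α]
    [MeasurableSpace β] {μ : Measure α} {f : α → β} {s : Set α}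
    (hf : AEMeasurable f (μ.restrict s)) : μ s ≤ (μ.restrict s).map f (f '' s) :=
  calc μ s = μ.restrict s (f ⁻¹' (f '' s)) :=
        (Measure.restrict_apply_superset (subset_preimage_image f s)).symm
    _ ≤ _ := Measure.le_map_apply hf _

/-- The union over all density-zero sets `J ⊆ ℕ` of the sets
`ℝ^J × [-1/2, 1/2]^(ℕ \ J)` is shy in `ℝ^ℕ`. -/
theorem shy_union_densityZero :
    IsShy (⋃ J ∈ {J : Set ℕ | HasDensityZero J},
      {x : ℕ → ℝ | ∀ k ∉ J, x k ∈ Set.Icc (-(1/2) : ℝ) (1/2)}) := by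
  set φ : ℝ → ℕ → ℝ := fun t k => t * 2 ^ k
  have hφ : Continuous φ := continuous_pi fun k => continuous_id.mul continuous_const
  set B := {x : ℕ → ℝ | HasDensityZero {k | x k ∉ Icc (-(1/2) : ℝ) (1/2)}}
  have hB : MeasurableSet B :=
    measurableSet_setOf_hasDensityZero fun k =>
      measurableSet_Icc.compl.preimage (measurable_pi_apply k)
  refine ⟨B, ?_, hB, Measure.map φ (volume.restrict (Icc 0 1)),
    ⟨φ '' Icc 0 1, isCompact_Icc.image hφ, ?_, measure_lt_top _ _⟩, fun v => ?_⟩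
  · simp only [subset_def, mem_iUnion]
    rintro x ⟨J, hJ, hxJ⟩
    exact hJ.mono fun k hk => by_contra fun hkJ => hk (hxJ k hkJ)
  · exact (by simp : 0 < volume (Icc (0 : ℝ) 1)).trans_le
      (Measure.le_map_restrict_apply_image hφ.aemeasurable)
  · have hsum : Summable fun k : ℕ => |((2 : ℝ) ^ k)⁻¹| := by
      simpa [abs_of_pos, inv_pow] using summable_geometric_two
    rw [image_add_right, Measure.map_apply hφ.measurable (hB.preimage (measurable_add_const _))]
    refine Measure.absolutelyContinuous_restrict <| measure_mono_null (fun t ht => ?_) <|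
      volume_setOf_frequently_mul_mem_closedBall (fun k => pow_ne_zero k two_ne_zero) hsum v (1 / 2)
    refine (HasDensityZero.frequently_notMem ht).mono fun k hk => ?_
    have hk : φ t k - v k ∈ Icc (-(1 / 2)) (1 / 2) := by simpa [sub_eq_add_neg] using hk
    rw [Real.closedBall_eq_Icc, mem_Icc]
    constructor <;> linarith [hk.1, hk.2]
end

section
/- Let (σ_n)_{n∈ℕ} be a sequence of positive reals with σ_n > 2^n/√(2π) for each n, let μ_n = γ_{(0,σ_n)} be the centered Gaussian measure on ℝ with standard deviation σ_n, and let μ = ∏_{n∈ℕ} μ_n be the infinite product probability measure on ℝ^ℕ. Then for every h = (h_n)_{n∈ℕ} ∈ ℝ^ℕ, μ((limsup_{n→∞} E_n) + h) = 0, where E_n = {x ∈ ℝ^ℕ : x_n ∈ [-1/2, 1/2]} and limsup_{n→∞} E_n = ⋂_{n=1}^∞ ⋃_{k=n}^∞ E_k. -/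
/-!
Borel–Cantelli. The translate by `h` of `limsup E_k` lies in the limsup of the translated
cylinders `{x | x_k ∈ [h_k - 1/2, h_k + 1/2]}`. Since the Gaussian density is bounded by
`1 / (√(2π) σ_k)`, such a unit-length cylinder has measure at most `1 / (√(2π) σ_k) < 2^{-k}`,
which is summable, whatever `h` is.
-/

open MeasureTheory ProbabilityTheory Filter Set Real
open scoped ENNReal NNReal

/-- The cylinder set `E n = {x ∈ ℝ^ℕ : x n ∈ [-1/2, 1/2]}`. -/
def cylE (n : ℕ) : Set (ℕ → ℝ) := {x : ℕ → ℝ | x n ∈ Set.Icc (-(1/2) : ℝ) (1/2)}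

lemma gaussianPDFReal_le_inv_sqrt (m : ℝ) (v : ℝ≥0) (x : ℝ) :
    gaussianPDFReal m v x ≤ (√(2 * π * v))⁻¹ := by
  rw [gaussianPDFReal_def]
  refine mul_le_of_le_one_right (by positivity) (exp_le_one_iff.2 ?_)
  exact div_nonpos_of_nonpos_of_nonneg (neg_nonpos.2 (sq_nonneg _)) (by positivity)

lemma gaussianReal_le_mul_volume (m : ℝ) {v : ℝ≥0} (hv : v ≠ 0) (s : Set ℝ) :
    gaussianReal m v s ≤ ENNReal.ofReal (√(2 * π * v))⁻¹ * volume s := by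
  rw [gaussianReal_apply m hv, ← setLIntegral_const]
  exact lintegral_mono fun x => ENNReal.ofReal_le_ofReal (gaussianPDFReal_le_inv_sqrt m v x)

lemma gaussianReal_sq_le_mul_volume (m : ℝ) {σ : ℝ} (hσ : 0 < σ) (s : Set ℝ) :
    gaussianReal m ⟨σ ^ 2, sq_nonneg σ⟩ s ≤ ENNReal.ofReal (√(2 * π) * σ)⁻¹ * volume s := by
  have hv : (⟨σ ^ 2, sq_nonneg σ⟩ : ℝ≥0) ≠ 0 := by
    simpa [← NNReal.coe_ne_zero] using hσ.ne'
  convert gaussianReal_le_mul_volume m hv s using 4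
  change _ = √(2 * π * σ ^ 2)
  rw [sqrt_mul two_pi_pos.le, sqrt_sq hσ.le]

lemma ENNReal.ofReal_inv_le_inv_two_pow {c : ℝ} {k : ℕ} (hc : 2 ^ k < c) :
    ENNReal.ofReal c⁻¹ ≤ 2⁻¹ ^ k := by
  have hc_pos : 0 < c := lt_trans (by positivity) hc
  rw [ENNReal.ofReal_inv_of_pos hc_pos, ← ENNReal.inv_pow, ENNReal.inv_le_inv]
  calc (2 : ℝ≥0∞) ^ k = ENNReal.ofReal (2 ^ k) := by
        rw [ENNReal.ofReal_pow zero_le_two, ENNReal.ofReal_ofNat]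
    _ ≤ ENNReal.ofReal c := ENNReal.ofReal_le_ofReal hc.le

lemma measure_coord_mem_of_finite_marginals {ι α : Type*} [MeasurableSpace α]
    {μ : Measure (ι → α)} {ν : ι → Measure α}
    (hμ : ∀ (s : Finset ι) (f : ι → Set α), (∀ i, MeasurableSet (f i)) →
      μ {x | ∀ i ∈ s, x i ∈ f i} = ∏ i ∈ s, ν i (f i))
    (k : ι) {t : Set α} (ht : MeasurableSet t) :
    μ {x | x k ∈ t} = ν k t := by
  simpa using hμ {k} (fun _ => t) (fun _ => ht)

lemma biInter_Ici_one_biUnion_Ici_subset_limsup {α : Type*} (s : ℕ → Set α) :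
    ⋂ n ∈ Ici 1, ⋃ k ∈ Ici n, s k ⊆ limsup s atTop := by
  intro x hx
  simp only [mem_iInter, mem_iUnion, mem_Ici] at hx
  rw [mem_limsup_iff_frequently_mem, frequently_atTop]
  intro n
  obtain ⟨k, hk, hxk⟩ := hx (n + 1) (by omega)
  exact ⟨k, by omega, hxk⟩

lemma image_limsup_subset {α β ι : Type*} (f : α → β) (s : ι → Set α) (l : Filter ι) :
    f '' limsup s l ⊆ limsup (fun i => f '' s i) l := by
  rintro _ ⟨x, hx, rfl⟩
  rw [mem_limsup_iff_frequently_mem] at hx ⊢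
  exact hx.mono fun i hxi => mem_image_of_mem f hxi

lemma image_add_cylE (h : ℕ → ℝ) (k : ℕ) :
    (· + h) '' cylE k = {x | x k ∈ Icc (h k - 1/2) (h k + 1/2)} := by
  ext y
  simp only [image_add_right, cylE, mem_preimage, mem_ofPred_eq, mem_Icc, Pi.add_apply,
    Pi.neg_apply]
  constructor <;> rintro ⟨h₁, h₂⟩ <;> constructor <;> linarith

theorem product_gaussian_limsup_translate_null_general
    (σ : ℕ → ℝ) (hσ : ∀ n, σ n > 2 ^ n / Real.sqrt (2 * Real.pi))
    (μ : Measure (ℕ → ℝ))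
    (hμ : ∀ (s : Finset ℕ) (f : ℕ → Set ℝ), (∀ i, MeasurableSet (f i)) →
      μ {x : ℕ → ℝ | ∀ i ∈ s, x i ∈ f i} =
        ∏ i ∈ s, gaussianReal 0 ⟨(σ i) ^ 2, sq_nonneg (σ i)⟩ (f i))
    (h : ℕ → ℝ) :
    μ ((fun x => x + h) '' (⋂ n ∈ Set.Ici 1, ⋃ k ∈ Set.Ici n, cylE k)) = 0 := by
  have hsqrt : 0 < √(2 * π) := sqrt_pos.2 two_pi_pos
  have hσ' : ∀ k, 2 ^ k < √(2 * π) * σ k := fun k => by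
    have := hσ k
    rwa [gt_iff_lt, div_lt_iff₀ hsqrt, mul_comm] at this
  have hσ_pos : ∀ k, 0 < σ k := fun k => pos_of_mul_pos_right ((hσ' k).trans' (by positivity))
    hsqrt.le
  have hbound : ∀ k, μ ((· + h) '' cylE k) ≤ 2⁻¹ ^ k := fun k => by
    rw [image_add_cylE, measure_coord_mem_of_finite_marginals hμ k measurableSet_Icc]
    refine (gaussianReal_sq_le_mul_volume 0 (hσ_pos k) _).trans ?_
    rw [Real.volume_Icc, show h k + 1/2 - (h k - 1/2) = 1 by ring, ENNReal.ofReal_one, mul_one]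
    exact ENNReal.ofReal_inv_le_inv_two_pow (hσ' k)
  refine measure_mono_null ((image_mono (biInter_Ici_one_biUnion_Ici_subset_limsup _)).trans
    (image_limsup_subset _ _ _)) (measure_limsup_atTop_eq_zero ?_)
  refine ne_top_of_le_ne_top ?_ (ENNReal.tsum_le_tsum hbound)
  rw [ENNReal.tsum_geometric_two]
  exact ENNReal.ofNat_ne_top

/-- Let `σ n > 2^n / √(2π)`, let `μ n = γ_{(0, σ n)}`, and let `μ` be the infinite product
probability measure on `ℝ^ℕ` (characterized by its finite-dimensional marginals being the
corresponding finite products). Then for every `h ∈ ℝ^ℕ`,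
`μ ((limsup E n) + h) = 0`, where `limsup E n = ⋂_{n ≥ 1} ⋃_{k ≥ n} E k`. -/
theorem product_gaussian_limsup_translate_null
    (σ : ℕ → ℝ) (hσ : ∀ n, σ n > 2 ^ n / Real.sqrt (2 * Real.pi))
    (μ : Measure (ℕ → ℝ)) [IsProbabilityMeasure μ]
    (hμ : ∀ (s : Finset ℕ) (f : ℕ → Set ℝ), (∀ i, MeasurableSet (f i)) →
      μ {x : ℕ → ℝ | ∀ i ∈ s, x i ∈ f i} =
        ∏ i ∈ s, gaussianReal 0 ⟨(σ i) ^ 2, sq_nonneg (σ i)⟩ (f i))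
    (h : ℕ → ℝ) :
    μ ((fun x => x + h) '' (⋂ n ∈ Set.Ici 1, ⋃ k ∈ Set.Ici n, cylE k)) = 0 :=
  product_gaussian_limsup_translate_null_general σ hσ μ hμ h
end

section
/- For every subset J ⊆ ℕ whose complement ℕ \ J is infinite, the set {x ∈ ℝ^ℕ : x_k ∈ [-1/2, 1/2] for every k ∉ J} is shy in ℝ^ℕ; that is, there exist a Borel set B containing it and a Borel measure μ on ℝ^ℕ such that some compact set U satisfies 0 < μ(U) < ∞ and μ(B + v) = 0 for every v ∈ ℝ^ℕ. -/
open MeasureTheory Filter Set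

/-!
Probe with Lebesgue measure on the segment `t ↦ t • (0, 1, 2, …)`, `t ∈ [0, 1]`. The segment
meets a translate `B + v` only at parameters `t` with `|t k - v k| ≤ 1/2` for every `k ∉ J`,
an interval of length `1/k`; since `Jᶜ` is infinite these lengths become arbitrarily small.
-/

open Topology

theorem isShy_of_volume_preimage_translate_eq_zero {B : Set (ℕ → ℝ)} (hB : MeasurableSet B)
    {f : ℝ → ℕ → ℝ} (hf : Continuous f)
    (h : ∀ v : ℕ → ℝ, volume (f ⁻¹' ((fun x => x + v) '' B)) = 0) : IsShy B := by
  have hU : MeasurableSet (f '' Icc 0 1) := (isCompact_Icc.image hf).isClosed.measurableSet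
  have hμU : (volume.restrict (Icc (0 : ℝ) 1)).map f (f '' Icc 0 1) = 1 := by
    rw [Measure.map_apply hf.measurable hU, Measure.restrict_apply (hf.measurable hU),
      inter_eq_right.mpr (subset_preimage_image f _), Real.volume_Icc, sub_zero,
      ENNReal.ofReal_one]
  refine ⟨B, subset_rfl, hB, (volume.restrict (Icc (0 : ℝ) 1)).map f,
    ⟨f '' Icc 0 1, isCompact_Icc.image hf, by simp [hμU], by simp [hμU]⟩, fun v => ?_⟩
  have hBv : MeasurableSet ((fun x => x + v) '' B) := by
    rw [image_add_right]
    exact measurable_add_const (-v) hB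
  rw [Measure.map_apply hf.measurable hBv]
  exact le_antisymm ((Measure.restrict_le_self _).trans_eq (h v)) zero_le

theorem volume_setOf_forall_mul_add_mem_Icc_eq_zero {s : Set ℕ} (hs : s.Infinite)
    {w : ℕ → ℝ} (hw : Tendsto w atTop atTop) (u : ℕ → ℝ) (a b : ℝ) :
    volume {t : ℝ | ∀ k ∈ s, t * w k + u k ∈ Icc a b} = 0 := by
  set S := {t : ℝ | ∀ k ∈ s, t * w k + u k ∈ Icc a b}
  have hbound : ∀ k ∈ s, w k ≠ 0 → volume S ≤ ENNReal.ofReal (|(w k)⁻¹| * (b - a)) := by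
    intro k hk hwk
    calc volume S ≤ volume ((· * w k) ⁻¹' Icc (a - u k) (b - u k)) :=
          measure_mono fun t ht => ⟨by linarith [(ht k hk).1], by linarith [(ht k hk).2]⟩
      _ = ENNReal.ofReal (|(w k)⁻¹| * (b - a)) := by
          rw [Real.volume_preimage_mul_right hwk, Real.volume_Icc, sub_sub_sub_cancel_right,
            ENNReal.ofReal_mul (abs_nonneg _)]
  have hlim : Tendsto (fun k => ENNReal.ofReal (|(w k)⁻¹| * (b - a))) atTop (𝓝 0) := by
    simpa using ENNReal.tendsto_ofReal ((hw.inv_tendsto_atTop.abs).mul_const (b - a))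
  refine le_antisymm (ge_of_tendsto_of_frequently hlim ?_) zero_le
  exact ((Nat.frequently_atTop_iff_infinite.mpr hs).and_eventually
    (hw.eventually_ne_atTop 0)).mono fun k ⟨hk, hwk⟩ => hbound k hk hwk

/-- For every `J ⊆ ℕ` with infinite complement, the set
`{x ∈ ℝ^ℕ : x k ∈ [-1/2, 1/2] for every k ∉ J}` is shy in `ℝ^ℕ`. -/
theorem shy_of_compl_infinite (J : Set ℕ) (hJ : Jᶜ.Infinite) :
    IsShy {x : ℕ → ℝ | ∀ k ∉ J, x k ∈ Set.Icc (-(1/2) : ℝ) (1/2)} := by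
  have hB : MeasurableSet {x : ℕ → ℝ | ∀ k ∉ J, x k ∈ Set.Icc (-(1/2) : ℝ) (1/2)} :=
    MeasurableSet.pi Jᶜ.to_countable fun _ _ => measurableSet_Icc
  refine isShy_of_volume_preimage_translate_eq_zero hB
    (f := fun t => t • fun k : ℕ => (k : ℝ)) (continuous_id.smul continuous_const) fun v => ?_
  rw [image_add_right]
  exact volume_setOf_forall_mul_add_mem_Icc_eq_zero hJ tendsto_natCast_atTop_atTop (-v) _ _
end

section
/- Every compact subset K of ℝ^ℕ (with the product topology) is shy; that is, there exist a Borel set B ⊇ K and a Borel measure μ on ℝ^ℕ such that some compact set U satisfies 0 < μ(U) < ∞ and μ(B + v) = 0 for every v ∈ ℝ^ℕ. -/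
open MeasureTheory Filter Set

/-!
A compact set `K ⊆ ℝ^ℕ` lies in a box `[a, b]`. Choose a direction `e` whose coordinates outgrow
those of `b - a` at every scale. Then two distinct points of the line `ℝ e` differ by a vector that
is too long in some coordinate to fit in a translate of the box, so every translate `[a, b] + v`
meets the line in at most one point. Lebesgue measure on the segment `[0, 1] e` is therefore a
probe witnessing that `[a, b] ⊇ K` is shy.
-/

theorem IsCompact.bddAbove_pi {ι : Type*} {α : ι → Type*} [∀ i, TopologicalSpace (α i)]
    [∀ i, LinearOrder (α i)] [∀ i, ClosedIciTopology (α i)] [∀ i, Nonempty (α i)]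
    {K : Set (∀ i, α i)} (hK : IsCompact K) : BddAbove K :=
  _root_.bddAbove_pi.2 fun i => hK.bddAbove_image (continuous_apply i).continuousOn

theorem IsCompact.bddBelow_pi {ι : Type*} {α : ι → Type*} [∀ i, TopologicalSpace (α i)]
    [∀ i, LinearOrder (α i)] [∀ i, ClosedIicTopology (α i)] [∀ i, Nonempty (α i)]
    {K : Set (∀ i, α i)} (hK : IsCompact K) : BddBelow K :=
  _root_.bddBelow_pi.2 fun i => hK.bddBelow_image (continuous_apply i).continuousOn

theorem exists_forall_pos_exists_lt_mul (d : ℕ → ℝ) :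
    ∃ e : ℕ → ℝ, ∀ r : ℝ, 0 < r → ∃ n, d n < r * e n := by
  refine ⟨fun n => n * (|d n| + 1), fun r hr => ?_⟩
  obtain ⟨n, hn⟩ := exists_nat_gt r⁻¹
  refine ⟨n, ?_⟩
  have hrn : 1 < r * n := by rwa [inv_lt_iff_one_lt_mul₀ hr, mul_comm] at hn
  calc d n < |d n| + 1 := (le_abs_self _).trans_lt (lt_add_one _)
    _ < r * n * (|d n| + 1) := lt_mul_left (by positivity) hrn
    _ = r * (n * (|d n| + 1)) := mul_assoc _ _ _

theorem subsingleton_preimage_smul_Icc {ι : Type*} {a b e : ι → ℝ}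
    (he : ∀ r : ℝ, 0 < r → ∃ i, b i - a i < r * e i) :
    ((fun t : ℝ => t • e) ⁻¹' Icc a b).Subsingleton := by
  intro s hs t ht
  by_contra hst
  obtain ⟨i, hi⟩ := he |t - s| (abs_pos.2 (sub_ne_zero.2 (Ne.symm hst)))
  obtain ⟨hsa, hsb⟩ : a i ≤ s * e i ∧ s * e i ≤ b i := ⟨hs.1 i, hs.2 i⟩
  obtain ⟨hta, htb⟩ : a i ≤ t * e i ∧ t * e i ≤ b i := ⟨ht.1 i, ht.2 i⟩
  have hdiff : |t - s| * e i ≤ b i - a i := by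
    rcases abs_cases (t - s) with ⟨h, -⟩ | ⟨h, -⟩ <;> rw [h] <;> linarith [sub_mul t s (e i)]
  exact hi.not_ge hdiff

noncomputable def segmentMeasure {ι : Type*} (e : ι → ℝ) : Measure (ι → ℝ) :=
  (volume.restrict (Icc (0 : ℝ) 1)).map (· • e)

namespace segmentMeasure

variable {ι : Type*} (e : ι → ℝ)

instance : IsFiniteMeasure (segmentMeasure e) := by
  unfold segmentMeasure; infer_instance

theorem one_le_apply_image_Icc : 1 ≤ segmentMeasure e ((· • e) '' Icc (0 : ℝ) 1) :=
  calc (1 : ENNReal) = volume.restrict (Icc (0 : ℝ) 1) (Icc 0 1) := by simp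
    _ ≤ volume.restrict (Icc (0 : ℝ) 1) ((· • e) ⁻¹' ((· • e) '' Icc 0 1)) :=
      measure_mono (subset_preimage_image _ _)
    _ ≤ segmentMeasure e ((· • e) '' Icc (0 : ℝ) 1) :=
      Measure.le_map_apply (by fun_prop) _

theorem apply_Icc_eq_zero [Countable ι] {a b : ι → ℝ}
    (he : ∀ r : ℝ, 0 < r → ∃ i, b i - a i < r * e i) :
    segmentMeasure e (Icc a b) = 0 := by
  rw [segmentMeasure, Measure.map_apply (by fun_prop) measurableSet_Icc]
  exact (subsingleton_preimage_smul_Icc he).measure_zero _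

end segmentMeasure

/-- Every compact subset of `ℝ^ℕ` (with the product topology) is shy. -/
theorem isCompact_isShy (K : Set (ℕ → ℝ)) (hK : IsCompact K) : IsShy K := by
  obtain ⟨a, ha⟩ := hK.bddBelow_pi
  obtain ⟨b, hb⟩ := hK.bddAbove_pi
  obtain ⟨e, he⟩ := exists_forall_pos_exists_lt_mul (b - a)
  refine ⟨Icc a b, fun x hx => ⟨ha hx, hb hx⟩, measurableSet_Icc, segmentMeasure e,
    ⟨_, isCompact_Icc.image (by fun_prop),
      zero_lt_one.trans_le (segmentMeasure.one_le_apply_image_Icc e), measure_lt_top _ _⟩,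
    fun v => ?_⟩
  rw [image_add_const_Icc]
  refine segmentMeasure.apply_Icc_eq_zero e fun r hr => ?_
  simpa only [Pi.add_apply, Pi.sub_apply, add_sub_add_right_eq_sub] using he r hr
end

section
/- Let λ be Lebesgue measure restricted to [0,1] and let λ_∞ be the product measure ⊗_{k∈ℕ} λ on [0,1]^ℕ. Then the set of sequences (x_k)_{k∈ℕ} ∈ [0,1]^ℕ that are uniformly distributed in [0,1] has λ_∞-measure 1. -/
/-!
The coordinates of a `λ_∞`-random sequence are pairwise independent and uniform on `[0, 1]`, so
for a fixed interval `[p, q]` the strong law of large numbers, applied to the indicators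
`1_{[p,q]}(x_k)`, shows that the frequency of visits of `x` to `[p, q]` tends to `q - p` almost
surely. Intersecting over the countably many rational intervals, almost every sequence has the
right limiting frequency on all of them, and an interval `[c, d]` is squeezed between rational
intervals slightly inside and slightly outside it.
-/

open MeasureTheory Filter Set
open scoped Classical

open ProbabilityTheory Topology

noncomputable def empiricalFreq {α : Type*} (x : ℕ → α) (s : Set α) [DecidablePred (· ∈ s)]
    (n : ℕ) : ℝ :=
  (((Finset.Icc 1 n).filter (fun k => x k ∈ s)).card : ℝ) / n

section empiricalFreq

variable {α : Type*} (x : ℕ → α)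

theorem empiricalFreq_mono {s t : Set α} [DecidablePred (· ∈ s)] [DecidablePred (· ∈ t)]
    (hst : s ⊆ t) (n : ℕ) : empiricalFreq x s n ≤ empiricalFreq x t n := by
  unfold empiricalFreq
  gcongr

theorem empiricalFreq_eq_sum_indicator (s : Set α) [DecidablePred (· ∈ s)] (n : ℕ) :
    empiricalFreq x s n = (∑ i ∈ Finset.range n, s.indicator 1 (x (i + 1))) / n := by
  rw [empiricalFreq, Finset.card_filter, ← Finset.Ico_add_one_right_eq_Icc,
    Finset.sum_Ico_eq_sum_range]
  simp [Set.indicator_apply, add_comm]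

end empiricalFreq

theorem exists_rat_btwn_sub_gt {c d u : ℝ} (hcd : c < d) (hu : u < d - c) :
    ∃ p q : ℚ, c < p ∧ (p : ℝ) < q ∧ (q : ℝ) < d ∧ u < q - p := by
  obtain ⟨p, hcp, hpd⟩ := exists_rat_btwn (lt_min hcd (by linarith : c < d - u))
  obtain ⟨q, hpq, hqd⟩ :=
    exists_rat_btwn (max_lt (lt_of_lt_of_le hpd (min_le_left _ _))
      (by linarith [min_le_right d (d - u)] : (p : ℝ) + u < d))
  exact ⟨p, q, hcp, (le_max_left _ _).trans_lt hpq, hqd,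
    by linarith [le_max_right (p : ℝ) (p + u)]⟩

theorem exists_rat_lt_lt_sub_lt {c d u : ℝ} (hu : d - c < u) :
    ∃ p q : ℚ, p < c ∧ d < q ∧ (q : ℝ) - p < u := by
  obtain ⟨p, hp, hpc⟩ := exists_rat_btwn (show d - u < c by linarith)
  obtain ⟨q, hdq, hq⟩ := exists_rat_btwn (show d < p + u by linarith)
  exact ⟨p, q, hpc, hdq, by linarith⟩

theorem isUniformlyDistributedIn_of_tendsto_rat {x : ℕ → ℝ} {a b : ℝ}
    (h : ∀ p q : ℚ, Tendsto (empiricalFreq x (Icc (p : ℝ) q)) atTop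
      (𝓝 (volume.real (Icc (p : ℝ) q ∩ Icc a b) / (b - a)))) :
    IsUniformlyDistributedIn x a b := by
  intro c d hac hcd hdb
  change Tendsto (empiricalFreq x (Icc c d)) atTop _
  have hab : 0 < b - a := by linarith
  refine tendsto_order.2 ⟨fun t ht => ?_, fun t ht => ?_⟩
  · obtain ⟨p, q, hcp, hpq, hqd, hqp⟩ :=
      exists_rat_btwn_sub_gt hcd ((lt_div_iff₀ hab).1 ht)
    have hlim : t < volume.real (Icc (p : ℝ) q ∩ Icc a b) / (b - a) := by
      rwa [inter_eq_left.2 (Icc_subset_Icc (by linarith) (by linarith)),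
        Real.volume_real_Icc_of_le hpq.le, lt_div_iff₀ hab]
    filter_upwards [(tendsto_order.1 (h p q)).1 t hlim] with n hn
    exact hn.trans_le (empiricalFreq_mono x (Icc_subset_Icc hcp.le hqd.le) n)
  · obtain ⟨p, q, hpc, hdq, hqp⟩ := exists_rat_lt_lt_sub_lt ((div_lt_iff₀ hab).1 ht)
    have hlim : volume.real (Icc (p : ℝ) q ∩ Icc a b) / (b - a) < t := by
      rw [div_lt_iff₀ hab]
      calc volume.real (Icc (p : ℝ) q ∩ Icc a b) ≤ volume.real (Icc (p : ℝ) q) :=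
            measureReal_mono inter_subset_left measure_Icc_lt_top.ne
        _ = q - p := Real.volume_real_Icc_of_le (by linarith)
        _ < t * (b - a) := hqp
    filter_upwards [(tendsto_order.1 (h p q)).2 t hlim] with n hn
    exact (empiricalFreq_mono x (Icc_subset_Icc hpc.le hdq.le) n).trans_lt hn

/-- `P` is the product measure `μ^⊗ℕ`, described through its finite-dimensional marginals. -/
def HasProductMarginals {α : Type*} [MeasurableSpace α] (P : Measure (ℕ → α)) (μ : Measure α) :
    Prop :=
  ∀ (s : Finset ℕ) (f : ℕ → Set α), (∀ i, MeasurableSet (f i)) →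
    P {x | ∀ i ∈ s, x i ∈ f i} = ∏ i ∈ s, μ (f i)

namespace HasProductMarginals

variable {α : Type*} [MeasurableSpace α] {P : Measure (ℕ → α)} {μ : Measure α}

theorem isProbabilityMeasure (h : HasProductMarginals P μ) : IsProbabilityMeasure P :=
  ⟨by simpa using h ∅ (fun _ => univ) fun _ => MeasurableSet.univ⟩

theorem map_eval (h : HasProductMarginals P μ) (i : ℕ) : P.map (fun x => x i) = μ := by
  ext A hA
  rw [Measure.map_apply (measurable_pi_apply i) hA]
  exact (by simpa using h {i} (fun _ => A) fun _ => hA : P {x | x i ∈ A} = μ A)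

theorem identDistrib_eval (h : HasProductMarginals P μ) (i j : ℕ) :
    IdentDistrib (fun x => x i) (fun x => x j) P P :=
  ⟨(measurable_pi_apply i).aemeasurable, (measurable_pi_apply j).aemeasurable,
    by rw [h.map_eval, h.map_eval]⟩

theorem indepFun_eval (h : HasProductMarginals P μ) {i j : ℕ} (hij : i ≠ j) :
    IndepFun (fun x => x i) (fun x => x j) P := by
  rw [indepFun_iff_measure_inter_preimage_eq_mul]
  intro A B hA hB
  have hpair := h {i, j} (fun k => if k = i then A else B) fun k => by
    split_ifs <;> assumption
  rw [Finset.prod_pair hij, if_pos rfl, if_neg hij.symm] at hpair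
  rw [← Measure.map_apply (measurable_pi_apply i) hA,
    ← Measure.map_apply (measurable_pi_apply j) hB, h.map_eval, h.map_eval, ← hpair]
  congr 1
  ext x
  simp [hij.symm]

theorem ae_forall_eval {p : α → Prop} (h : HasProductMarginals P μ) (hp : ∀ᵐ y ∂μ, p y) :
    ∀ᵐ x ∂P, ∀ k, p (x k) :=
  ae_all_iff.2 fun k => ae_of_ae_map (measurable_pi_apply k).aemeasurable (h.map_eval k ▸ hp)

theorem ae_tendsto_empiricalFreq (h : HasProductMarginals P μ) {s : Set α}
    [DecidablePred (· ∈ s)] (hs : MeasurableSet s) :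
    ∀ᵐ x ∂P, Tendsto (empiricalFreq x s) atTop (𝓝 (μ.real s)) := by
  have := h.isProbabilityMeasure
  have hind : Measurable (s.indicator (1 : α → ℝ)) := measurable_const.indicator hs
  set X : ℕ → (ℕ → α) → ℝ := fun i x => s.indicator 1 (x (i + 1))
  have hint : Integrable (X 0) P :=
    (integrable_const (1 : ℝ)).mono' (hind.comp (measurable_pi_apply 1)).aestronglyMeasurable
      (ae_of_all _ fun x => (norm_indicator_le_norm_self _ _).trans (by simp))
  have hindep : Pairwise fun i j => IndepFun (X i) (X j) P := fun i j hij =>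
    (h.indepFun_eval (by simpa using hij)).comp hind hind
  have hident : ∀ i, IdentDistrib (X i) (X 0) P P := fun i =>
    (h.identDistrib_eval (i + 1) 1).comp hind
  have hmean : P[X 0] = μ.real s := by
    rw [← integral_map (measurable_pi_apply 1).aemeasurable hind.aestronglyMeasurable,
      h.map_eval, integral_indicator_one hs]
  filter_upwards [strong_law_ae_real X hint hindep hident] with x hx
  rw [hmean] at hx
  exact hx.congr fun n => (empiricalFreq_eq_sum_indicator x s n).symm

end HasProductMarginals

theorem product_lebesgue_ae_uniformlyDistributed_general
    (lamInf : Measure (ℕ → ℝ))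
    (hmarg : ∀ (s : Finset ℕ) (f : ℕ → Set ℝ), (∀ i, MeasurableSet (f i)) →
      lamInf {x : ℕ → ℝ | ∀ i ∈ s, x i ∈ f i} =
        ∏ i ∈ s, (volume.restrict (Set.Icc (0:ℝ) 1)) (f i)) :
    lamInf {x : ℕ → ℝ | (∀ k, x k ∈ Set.Icc (0:ℝ) 1) ∧
      IsUniformlyDistributedIn x 0 1} = 1 := by
  have hP : HasProductMarginals lamInf (volume.restrict (Icc 0 1)) := hmarg
  have hmem : ∀ᵐ x ∂lamInf, ∀ k, x k ∈ Icc (0 : ℝ) 1 :=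
    hP.ae_forall_eval (ae_restrict_mem measurableSet_Icc)
  have hfreq : ∀ᵐ x ∂lamInf, ∀ p q : ℚ, Tendsto (empiricalFreq x (Icc (p : ℝ) q)) atTop
      (𝓝 ((volume.restrict (Icc (0 : ℝ) 1)).real (Icc (p : ℝ) q))) :=
    ae_all_iff.2 fun _ => ae_all_iff.2 fun _ => hP.ae_tendsto_empiricalFreq measurableSet_Icc
  have hae : ∀ᵐ x ∂lamInf, (∀ k, x k ∈ Icc (0 : ℝ) 1) ∧ IsUniformlyDistributedIn x 0 1 := by
    filter_upwards [hmem, hfreq] with x hx hx_freq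
    refine ⟨hx, isUniformlyDistributedIn_of_tendsto_rat fun p q => ?_⟩
    simpa [measureReal_restrict_apply measurableSet_Icc] using hx_freq p q
  have := hP.isProbabilityMeasure
  exact (measure_congr (ae_eq_univ.2 (mem_ae_iff.1 hae))).trans measure_univ

/-- Let `λ_∞` be the countable product of copies of Lebesgue measure restricted to
`[0, 1]` (characterized as the probability measure on `ℝ^ℕ` whose finite-dimensional
marginals are the corresponding finite products). Then `λ_∞`-almost every sequence in
`[0,1]^ℕ` is uniformly distributed in `[0, 1]`. -/
theorem product_lebesgue_ae_uniformlyDistributed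
    (lamInf : Measure (ℕ → ℝ)) [IsProbabilityMeasure lamInf]
    (hmarg : ∀ (s : Finset ℕ) (f : ℕ → Set ℝ), (∀ i, MeasurableSet (f i)) →
      lamInf {x : ℕ → ℝ | ∀ i ∈ s, x i ∈ f i} =
        ∏ i ∈ s, (volume.restrict (Set.Icc (0:ℝ) 1)) (f i)) :
    lamInf {x : ℕ → ℝ | (∀ k, x k ∈ Set.Icc (0:ℝ) 1) ∧
      IsUniformlyDistributedIn x 0 1} = 1 :=
  product_lebesgue_ae_uniformlyDistributed_general lamInf hmarg
end

section
/- Let V be a Polish topological vector space over ℝ and let μ be a Borel measure on V that is quasi-finite (there exists a Borel set A with 0 < μ(A) < ∞) and translation-quasi-invariant (for every Borel set A and every h ∈ V, μ(A) = 0 if and only if μ(A + h) = 0). Then every set X ⊆ V that is contained in a Borel μ-null set is shy in V; that is, there exist a Borel set B ⊇ X and a Borel measure ν on V such that some compact set U satisfies 0 < ν(U) < ∞ and ν(B + v) = 0 for every v ∈ V. -/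
open MeasureTheory

/-! `μ` itself is a transverse measure for `N`: every measure on a Polish space is inner regular
with respect to compact sets, so a set of positive finite `μ`-measure contains a compact set of
positive finite measure, and quasi-invariance makes every translate of `N` a `μ`-null set. -/

theorem shy_of_null_of_quasiInvariant_general
    {V : Type*} [AddCommGroup V] [TopologicalSpace V] [PolishSpace V]
    [MeasurableSpace V] [BorelSpace V]
    (μ : Measure V)
    (hquasiFin : ∃ A : Set V, MeasurableSet A ∧ 0 < μ A ∧ μ A < ⊤)
    (hquasiInv : ∀ A : Set V, MeasurableSet A → ∀ h : V,
      (μ A = 0 ↔ μ ((fun x => x + h) '' A) = 0))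
    (X : Set V) (N : Set V) (hN : MeasurableSet N) (hXN : X ⊆ N) (hNnull : μ N = 0) :
    ∃ B : Set V, X ⊆ B ∧ MeasurableSet B ∧
      ∃ ν : Measure V,
        (∃ U : Set V, IsCompact U ∧ 0 < ν U ∧ ν U < ⊤) ∧
        ∀ v : V, ν ((fun x => x + v) '' B) = 0 := by
  obtain ⟨A, hA, hApos, hAfin⟩ := hquasiFin
  obtain ⟨K, hKA, hK, hKpos⟩ := hA.exists_lt_isCompact_of_ne_top hAfin.ne hApos
  exact ⟨N, hXN, hN, μ, ⟨K, hK, hKpos, (measure_mono hKA).trans_lt hAfin⟩,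
    fun v => (hquasiInv N hN v).1 hNnull⟩

/-- Let `V` be a Polish topological vector space over `ℝ` and `μ` a Borel measure on `V`
that is quasi-finite and translation-quasi-invariant. Then every set `X ⊆ V` contained in
a Borel `μ`-null set is shy in `V`: there exist a Borel set `B ⊇ X` and a Borel measure
`ν` on `V` such that some compact set `U` satisfies `0 < ν U < ∞` and `ν (B + v) = 0` for
every `v ∈ V`. -/
theorem shy_of_null_of_quasiInvariant
    {V : Type*} [AddCommGroup V] [Module ℝ V] [TopologicalSpace V]
    [IsTopologicalAddGroup V] [ContinuousSMul ℝ V] [PolishSpace V]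
    [MeasurableSpace V] [BorelSpace V]
    (μ : Measure V)
    (hquasiFin : ∃ A : Set V, MeasurableSet A ∧ 0 < μ A ∧ μ A < ⊤)
    (hquasiInv : ∀ A : Set V, MeasurableSet A → ∀ h : V,
      (μ A = 0 ↔ μ ((fun x => x + h) '' A) = 0))
    (X : Set V) (N : Set V) (hN : MeasurableSet N) (hXN : X ⊆ N) (hNnull : μ N = 0) :
    ∃ B : Set V, X ⊆ B ∧ MeasurableSet B ∧
      ∃ ν : Measure V,
        (∃ U : Set V, IsCompact U ∧ 0 < ν U ∧ ν U < ⊤) ∧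
        ∀ v : V, ν ((fun x => x + v) '' B) = 0 :=
  shy_of_null_of_quasiInvariant_general μ hquasiFin hquasiInv X N hN hXN hNnull
end
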